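/- arXiv:1905.01366 — 16 statements merged into one kernel-verified Lean document; each statement's English description precedes it below -/
import Mathlib

section
/- For a 2×n matrix A = (a_{ij}) over a division ring R, the left quasi-Plücker coordinate is well defined: for i ≠ k, (a_{1i} - a_{1k}a_{2k}^{-1}a_{2i})^{-1}(a_{1j} - a_{1k}a_{2k}^{-1}a_{2j}) = (a_{2i} - a_{2k}a_{1k}^{-1}a_{1i})^{-1}(a_{2j} - a_{2k}a_{1k}^{-1}a_{1j}), whenever a_{1k}, a_{2k} and the quasideterminants involved are nonzero. -/
/-- Well-definedness of the left quasi-Plücker coordinate of a 2×n matrix over a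
division ring: the row-1 and row-2 expressions agree. -/
theorem quasiPlucker_well_defined {K : Type*} [DivisionRing K]
    (a1i a1j a1k a2i a2j a2k : K)
    (h1k : a1k ≠ 0) (h2k : a2k ≠ 0)
    (hq1 : a1i - a1k * a2k⁻¹ * a2i ≠ 0)
    (hq2 : a2i - a2k * a1k⁻¹ * a1i ≠ 0) :
    (a1i - a1k * a2k⁻¹ * a2i)⁻¹ * (a1j - a1k * a2k⁻¹ * a2j) =
      (a2i - a2k * a1k⁻¹ * a1i)⁻¹ * (a2j - a2k * a1k⁻¹ * a1j) := by
  have hc : a1k * a2k⁻¹ ≠ 0 := mul_ne_zero h1k (inv_ne_zero h2k)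
  have key : ∀ x y : K, a1k * a2k⁻¹ * (y - a2k * a1k⁻¹ * x) = -(x - a1k * a2k⁻¹ * y) := by
    intro x y
    have : a1k * a2k⁻¹ * (a2k * a1k⁻¹ * x) = x := by
      rw [mul_assoc a2k a1k⁻¹ x, mul_assoc a1k, ← mul_assoc a2k⁻¹ a2k,
        inv_mul_cancel₀ h2k, one_mul, ← mul_assoc, mul_inv_cancel₀ h1k, one_mul]
    rw [mul_sub, this, neg_sub]
  have hi := key a1i a2i
  have hj := key a1j a2j
  have : (a1i - a1k * a2k⁻¹ * a2i)⁻¹ * (a1j - a1k * a2k⁻¹ * a2j) =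
      (-(a1i - a1k * a2k⁻¹ * a2i))⁻¹ * (-(a1j - a1k * a2k⁻¹ * a2j)) := by
    rw [inv_neg, neg_mul_neg]
  rw [this, ← hi, ← hj, mul_inv_rev, mul_assoc, ← mul_assoc ((a1k * a2k⁻¹)⁻¹),
    inv_mul_cancel₀ hc, one_mul]
end

section
/- Quasi-Plücker coordinates of a 2×n matrix over a division ring are invariant under left multiplication by an invertible 2×2 matrix: q^k_{ij}(g·A) = q^k_{ij}(A) for every invertible 2×2 matrix g over R, assuming all expressions are defined. -/
/-- The left quasi-Plücker coordinate `q^k_{ij}` of columns `x`, `y` relative to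
column `k` of a 2×n matrix over a division ring. -/
noncomputable def qq {K : Type*} [DivisionRing K] (k x y : K × K) : K :=
  (x.1 - k.1 * k.2⁻¹ * x.2)⁻¹ * (y.1 - k.1 * k.2⁻¹ * y.2)

/-- Left multiplication of a column vector by a 2×2 matrix. -/
def mulVec2 {K : Type*} [DivisionRing K] (g : Matrix (Fin 2) (Fin 2) K)
    (v : K × K) : K × K :=
  (g 0 0 * v.1 + g 0 1 * v.2, g 1 0 * v.1 + g 1 1 * v.2)

/-- Quasi-Plücker coordinates are invariant under left multiplication by an
invertible 2×2 matrix: `q^k_{ij}(g·A) = q^k_{ij}(A)`. -/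
theorem quasiPlucker_left_invariant {K : Type*} [DivisionRing K]
    (g : Matrix (Fin 2) (Fin 2) K) (hg : IsUnit g)
    (ak ai aj : K × K)
    (hk : ak.2 ≠ 0)
    (hq : ai.1 - ak.1 * ak.2⁻¹ * ai.2 ≠ 0)
    (hk' : (mulVec2 g ak).2 ≠ 0)
    (hq' : (mulVec2 g ai).1 -
        (mulVec2 g ak).1 * (mulVec2 g ak).2⁻¹ * (mulVec2 g ai).2 ≠ 0) :
    qq (mulVec2 g ak) (mulVec2 g ai) (mulVec2 g aj) = qq ak ai aj := by
  simp only [qq, mulVec2] at hk' hq' ⊢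
  set a := g 0 0 with ha
  set b := g 0 1 with hb
  set c := g 1 0 with hc
  set d := g 1 1 with hd
  set v := c * ak.1 + d * ak.2 with hv
  set u := a * ak.1 + b * ak.2 with hu
  set w := u * v⁻¹ with hw
  set α := a - w * c with hα
  have hwv : w * v = u := inv_mul_cancel_right₀ hk' u
  have h1 : α * ak.1 = (w * d - b) * ak.2 := by
    have h3 : w * (c * ak.1) = u - w * (d * ak.2) := by
      rw [show c * ak.1 = v - d * ak.2 from by rw [hv]; noncomm_ring,
        mul_sub, hwv]
    calc α * ak.1 = a * ak.1 - w * (c * ak.1) := by rw [hα]; noncomm_ring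
      _ = a * ak.1 - (u - w * (d * ak.2)) := by rw [h3]
      _ = (w * d - b) * ak.2 := by rw [hu]; noncomm_ring
  have hA : α * (ak.1 * ak.2⁻¹) = w * d - b := by
    rw [← mul_assoc, h1, mul_inv_cancel_right₀ hk]
  have key : ∀ x : K × K, a * x.1 + b * x.2 - w * (c * x.1 + d * x.2)
      = α * (x.1 - ak.1 * ak.2⁻¹ * x.2) := by
    intro x
    calc a * x.1 + b * x.2 - w * (c * x.1 + d * x.2)
        = α * x.1 - (w * d - b) * x.2 := by rw [hα]; noncomm_ring
      _ = α * x.1 - α * (ak.1 * ak.2⁻¹) * x.2 := by rw [hA]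
      _ = α * (x.1 - ak.1 * ak.2⁻¹ * x.2) := by noncomm_ring
  have hgoal1 : a * ai.1 + b * ai.2 - w * (c * ai.1 + d * ai.2)
      = α * (ai.1 - ak.1 * ak.2⁻¹ * ai.2) := key ai
  have hα0 : α ≠ 0 := by
    intro h0
    exact hq' (by rw [hgoal1, h0, zero_mul])
  rw [key ai, key aj, mul_inv_rev, mul_assoc, inv_mul_cancel_left₀ hα0]
end

section
/- If Λ = diag(λ₁,…,λₙ) is an invertible diagonal matrix over a division ring R, then q^k_{ij}(A·Λ) = λ_i^{-1} · q^k_{ij}(A) · λ_j, assuming all expressions are defined. -/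
/-- Right scaling of a column by an element of `K` (column action of a diagonal
matrix). -/
def scCol {K : Type*} [DivisionRing K] (v : K × K) (lam : K) : K × K :=
  (v.1 * lam, v.2 * lam)

/-- `q^k_{ij}(A·Λ) = λ_i⁻¹ · q^k_{ij}(A) · λ_j` for an invertible diagonal
matrix `Λ = diag(λ₁,…,λₙ)`. -/
theorem quasiPlucker_diag_scaling {K : Type*} [DivisionRing K]
    (ak ai aj : K × K) (lamI lamJ lamK : K)
    (hI : lamI ≠ 0) (hJ : lamJ ≠ 0) (hK : lamK ≠ 0)
    (hk : ak.2 ≠ 0)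
    (hq : ai.1 - ak.1 * ak.2⁻¹ * ai.2 ≠ 0) :
    qq (scCol ak lamK) (scCol ai lamI) (scCol aj lamJ) =
      lamI⁻¹ * qq ak ai aj * lamJ := by
  simp only [qq, scCol]
  have h1 : ak.1 * lamK * (ak.2 * lamK)⁻¹ = ak.1 * ak.2⁻¹ := by
    rw [mul_inv_rev, ← mul_assoc, mul_assoc (ak.1), mul_inv_cancel₀ hK, mul_one]
  rw [h1]
  have h2 : ∀ (v : K × K) (lam : K),
      v.1 * lam - ak.1 * ak.2⁻¹ * (v.2 * lam) = (v.1 - ak.1 * ak.2⁻¹ * v.2) * lam := by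
    intro v lam; simp [sub_mul, mul_assoc]
  rw [h2, h2, mul_inv_rev]; noncomm_ring
end

section
/- Noncommutative skew-symmetry of quasi-Plücker coordinates: for distinct indices i, j, k, one has q^k_{ij} · q^i_{jk} · q^j_{ki} = -1, whenever all terms are defined. -/
private lemma fac {K : Type*} [DivisionRing K] (p a b : K) (hb : b ≠ 0) :
    a - p * b = (a * b⁻¹ - p) * b := by
  rw [sub_mul, mul_assoc, inv_mul_cancel₀ hb, mul_one]

private lemma abstract {K : Type*} [DivisionRing K] (b c x y z : K)
    (hb : b ≠ 0) (hc : c ≠ 0) (ha : b - c ≠ 0)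
    (hx : x ≠ 0) (hy : y ≠ 0) (hz : z ≠ 0) :
    ((b - c) * x)⁻¹ * (b * y) * ((c * y)⁻¹ * (-(b - c) * z)) * ((-b * z)⁻¹ * (-c * x)) = -1 := by
  have key : ∀ t : K, b * (c⁻¹ * ((b - c) * t)) = (b - c) * (c⁻¹ * (b * t)) := by
    intro t
    have h : b * c⁻¹ * (b - c) = (b - c) * c⁻¹ * b := by
      simp [mul_sub, sub_mul, mul_assoc, inv_mul_cancel₀ hc, mul_inv_cancel₀ hc,
        mul_inv_cancel_left₀ hc, inv_mul_cancel_left₀ hc]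
    calc b * (c⁻¹ * ((b - c) * t)) = (b * c⁻¹ * (b - c)) * t := by
          simp [mul_assoc]
      _ = ((b - c) * c⁻¹ * b) * t := by rw [h]
      _ = (b - c) * (c⁻¹ * (b * t)) := by simp [mul_assoc]
  simp only [mul_inv_rev, inv_neg, neg_mul, mul_neg, neg_neg, mul_assoc]
  rw [neg_eq_iff_eq_neg, neg_neg]
  rw [mul_inv_cancel_left₀ hy, mul_inv_cancel_left₀ hz, key,
    inv_mul_cancel_left₀ ha, mul_inv_cancel_left₀ hb, inv_mul_cancel_left₀ hc,
    inv_mul_cancel₀ hx]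

/-- Noncommutative skew-symmetry: `q^k_{ij} · q^i_{jk} · q^j_{ki} = -1`. -/
theorem quasiPlucker_skew_symmetry {K : Type*} [DivisionRing K]
    (ai aj ak : K × K)
    (hk : ak.2 ≠ 0) (hi : ai.2 ≠ 0) (hj : aj.2 ≠ 0)
    (hq1 : ai.1 - ak.1 * ak.2⁻¹ * ai.2 ≠ 0)
    (hq2 : aj.1 - ai.1 * ai.2⁻¹ * aj.2 ≠ 0)
    (hq3 : ak.1 - aj.1 * aj.2⁻¹ * ak.2 ≠ 0) :
    qq ak ai aj * qq ai aj ak * qq aj ak ai = -1 := by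
  set u := ai.1 * ai.2⁻¹ with hu
  set v := aj.1 * aj.2⁻¹ with hv
  set w := ak.1 * ak.2⁻¹ with hw
  have h1 : u - w ≠ 0 := fun h => hq1 (by rw [fac (ak.1 * ak.2⁻¹) ai.1 ai.2 hi, ← hu, ← hw, h, zero_mul])
  have h2 : v - u ≠ 0 := fun h => hq2 (by rw [fac (ai.1 * ai.2⁻¹) aj.1 aj.2 hj, ← hv, ← hu, h, zero_mul])
  have h3 : w - v ≠ 0 := fun h => hq3 (by rw [fac (aj.1 * aj.2⁻¹) ak.1 ak.2 hk, ← hw, ← hv, h, zero_mul])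
  simp only [qq]
  rw [fac (ak.1 * ak.2⁻¹) ai.1 ai.2 hi, fac (ak.1 * ak.2⁻¹) aj.1 aj.2 hj,
    fac (ai.1 * ai.2⁻¹) aj.1 aj.2 hj, fac (ai.1 * ai.2⁻¹) ak.1 ak.2 hk,
    fac (aj.1 * aj.2⁻¹) ak.1 ak.2 hk, fac (aj.1 * aj.2⁻¹) ai.1 ai.2 hi]
  rw [← hu, ← hv, ← hw]
  rw [show w - u = -((v - w) - (v - u)) by abel, show u - w = (v - w) - (v - u) by abel,
    show w - v = -(v - w) by abel, show u - v = -(v - u) by abel]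
  exact abstract (v - w) (v - u) ai.2 aj.2 ak.2 (fun h => h3 (by rw [← neg_sub]; simp [h]))
    h2 (by rwa [show (v - w) - (v - u) = u - w by abel]) hi hj hk
end

section
/- Noncommutative Plücker identity: for distinct indices i, j, k, ℓ, one has q^k_{ij} q^ℓ_{ji} + q^k_{iℓ} q^j_{ℓi} = 1, whenever all terms are defined. -/
private lemma core_plucker {K : Type*} [DivisionRing K] (u v w x y : K) (h : w - v ≠ 0) :
    (w - u) * (w - v)⁻¹ * (x - v * y) + (v - u) * (v - w)⁻¹ * (x - w * y) = x - u * y := by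
  set t := (w - v)⁻¹ with ht
  have h1 : (w - v) * t = 1 := mul_inv_cancel₀ h
  have h2 : t * (w - v) = 1 := inv_mul_cancel₀ h
  have hvw : (v - w)⁻¹ = -t := by rw [ht, ← neg_sub, inv_neg]
  rw [hvw]
  have key : v * t * w = w * t * v := by
    have hv : v = w - (w - v) := by noncomm_ring
    calc v * t * w = (w - (w - v)) * t * w := by rw [← hv]
      _ = w * t * w - (w - v) * t * w := by noncomm_ring
      _ = w * t * w - w := by rw [h1, one_mul]
      _ = w * t * w - w * (t * (w - v)) := by rw [h2, mul_one]
      _ = w * t * (w - (w - v)) := by noncomm_ring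
      _ = w * t * v := by rw [← hv]
  have expand : (w - u) * t * (x - v * y) + (v - u) * (-t) * (x - w * y)
      = (w - v) * t * x - (w * t * v - v * t * w + u * (t * w - t * v)) * y := by noncomm_ring
  rw [expand, key, h1, one_mul, sub_self, zero_add, ← mul_sub, h2, mul_one]

/-- Noncommutative Plücker identity:
`q^k_{ij} q^ℓ_{ji} + q^k_{iℓ} q^j_{ℓi} = 1`. -/
theorem quasiPlucker_identity {K : Type*} [DivisionRing K]
    (ai aj ak al : K × K)
    (hk : ak.2 ≠ 0) (hl : al.2 ≠ 0) (hj : aj.2 ≠ 0)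
    (hq1 : ai.1 - ak.1 * ak.2⁻¹ * ai.2 ≠ 0)
    (hq2 : aj.1 - al.1 * al.2⁻¹ * aj.2 ≠ 0)
    (hq3 : al.1 - aj.1 * aj.2⁻¹ * al.2 ≠ 0) :
    qq ak ai aj * qq al aj ai + qq ak ai al * qq aj al ai = 1 := by
  set u := ak.1 * ak.2⁻¹ with hu
  set v := al.1 * al.2⁻¹ with hv
  set w := aj.1 * aj.2⁻¹ with hw
  have hwj : w * aj.2 = aj.1 := by
    rw [hw, mul_assoc, inv_mul_cancel₀ hj, mul_one]
  have hvl : v * al.2 = al.1 := by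
    rw [hv, mul_assoc, inv_mul_cancel₀ hl, mul_one]
  -- factor the various quasideterminants
  have hB : aj.1 - u * aj.2 = (w - u) * aj.2 := by rw [sub_mul, hwj]
  have hC : aj.1 - v * aj.2 = (w - v) * aj.2 := by rw [sub_mul, hwj]
  have hE : al.1 - u * al.2 = (v - u) * al.2 := by rw [sub_mul, hvl]
  have hF : al.1 - w * al.2 = (v - w) * al.2 := by rw [sub_mul, hvl]
  have hwv : w - v ≠ 0 := by
    intro h0
    apply hq2
    rw [hC, h0, zero_mul]
  have hvw : v - w ≠ 0 := by
    intro h0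
    apply hq3
    rw [hF, h0, zero_mul]
  set A := ai.1 - u * ai.2 with hA
  have hjj : aj.2 * (aj.2⁻¹ * (w - v)⁻¹) = (w - v)⁻¹ := by
    rw [← mul_assoc, mul_inv_cancel₀ hj, one_mul]
  have hll : al.2 * (al.2⁻¹ * (v - w)⁻¹) = (v - w)⁻¹ := by
    rw [← mul_assoc, mul_inv_cancel₀ hl, one_mul]
  have t1 : qq ak ai aj * qq al aj ai
      = A⁻¹ * ((w - u) * (w - v)⁻¹ * (ai.1 - v * ai.2)) := by
    show A⁻¹ * (aj.1 - u * aj.2) * ((aj.1 - v * aj.2)⁻¹ * (ai.1 - v * ai.2))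
        = A⁻¹ * ((w - u) * (w - v)⁻¹ * (ai.1 - v * ai.2))
    rw [hB, hC, mul_inv_rev]
    simp only [mul_assoc, mul_inv_cancel_left₀ hj]
  have t2 : qq ak ai al * qq aj al ai
      = A⁻¹ * ((v - u) * (v - w)⁻¹ * (ai.1 - w * ai.2)) := by
    show A⁻¹ * (al.1 - u * al.2) * ((al.1 - w * al.2)⁻¹ * (ai.1 - w * ai.2))
        = A⁻¹ * ((v - u) * (v - w)⁻¹ * (ai.1 - w * ai.2))
    rw [hE, hF, mul_inv_rev]
    simp only [mul_assoc, mul_inv_cancel_left₀ hl]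
  rw [t1, t2, ← mul_add, core_plucker u v w ai.1 ai.2 hwv, ← hA, inv_mul_cancel₀ hq1]
end

section
/- For four vectors x,y,z,t ∈ R² over a division ring R (with all expressions defined), the noncommutative cross-ratio κ(x,y,z,t) = q^y_{zt} · q^x_{tz} equals z₂^{-1}(z₁z₂^{-1} - y₁y₂^{-1})^{-1}(t₁t₂^{-1} - y₁y₂^{-1})(t₁t₂^{-1} - x₁x₂^{-1})^{-1}(z₁z₂^{-1} - x₁x₂^{-1})z₂. -/
/-- The noncommutative cross-ratio `κ(x,y,z,t) = q^y_{zt} · q^x_{tz}`. -/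
noncomputable def cr {K : Type*} [DivisionRing K] (x y z t : K × K) : K :=
  qq y z t * qq x t z

/-- Explicit formula: `κ(x,y,z,t)` equals
`z₂⁻¹(z₁z₂⁻¹-y₁y₂⁻¹)⁻¹(t₁t₂⁻¹-y₁y₂⁻¹)(t₁t₂⁻¹-x₁x₂⁻¹)⁻¹(z₁z₂⁻¹-x₁x₂⁻¹)z₂`. -/
theorem cross_ratio_explicit {K : Type*} [DivisionRing K]
    (x y z t : K × K)
    (hx : x.2 ≠ 0) (hy : y.2 ≠ 0) (hz : z.2 ≠ 0) (ht : t.2 ≠ 0)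
    (hq1 : z.1 - y.1 * y.2⁻¹ * z.2 ≠ 0)
    (hq2 : t.1 - x.1 * x.2⁻¹ * t.2 ≠ 0)
    (hs1 : z.1 * z.2⁻¹ - y.1 * y.2⁻¹ ≠ 0)
    (hs2 : t.1 * t.2⁻¹ - x.1 * x.2⁻¹ ≠ 0) :
    cr x y z t =
      z.2⁻¹ * (z.1 * z.2⁻¹ - y.1 * y.2⁻¹)⁻¹ * (t.1 * t.2⁻¹ - y.1 * y.2⁻¹) *
        (t.1 * t.2⁻¹ - x.1 * x.2⁻¹)⁻¹ * (z.1 * z.2⁻¹ - x.1 * x.2⁻¹) * z.2 := by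
  have e1 : z.1 - y.1 * y.2⁻¹ * z.2 = (z.1 * z.2⁻¹ - y.1 * y.2⁻¹) * z.2 := by
    rw [sub_mul, inv_mul_cancel_right₀ hz]
  have e2 : t.1 - y.1 * y.2⁻¹ * t.2 = (t.1 * t.2⁻¹ - y.1 * y.2⁻¹) * t.2 := by
    rw [sub_mul, inv_mul_cancel_right₀ ht]
  have e3 : t.1 - x.1 * x.2⁻¹ * t.2 = (t.1 * t.2⁻¹ - x.1 * x.2⁻¹) * t.2 := by
    rw [sub_mul, inv_mul_cancel_right₀ ht]
  have e4 : z.1 - x.1 * x.2⁻¹ * z.2 = (z.1 * z.2⁻¹ - x.1 * x.2⁻¹) * z.2 := by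
    rw [sub_mul, inv_mul_cancel_right₀ hz]
  unfold cr qq
  rw [e1, e2, e3, e4, mul_inv_rev, mul_inv_rev]
  simp [mul_assoc, mul_inv_cancel_left₀ ht, inv_mul_cancel_left₀ ht]
end

section
/- Projective invariance of the noncommutative cross-ratio: for an invertible 2×2 matrix g over R and invertible scalars λ₁,λ₂,λ₃,λ₄ ∈ R, one has κ(gxλ₁, gyλ₂, gzλ₃, gtλ₄) = λ₃^{-1} κ(x,y,z,t) λ₃, assuming all expressions are defined. -/
section aux
variable {K : Type*} [DivisionRing K]

lemma ratio_scCol (v : K × K) {μ : K} (hμ : μ ≠ 0) :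
    (scCol v μ).1 * (scCol v μ).2⁻¹ = v.1 * v.2⁻¹ := by
  simp only [scCol, mul_inv_rev]
  rw [mul_assoc v.1 μ, ← mul_assoc μ, mul_inv_cancel₀ hμ, one_mul]

lemma diff_scCol (k x : K × K) {μ α : K} (hμ : μ ≠ 0) :
    (scCol x α).1 - (scCol k μ).1 * (scCol k μ).2⁻¹ * (scCol x α).2
      = (x.1 - k.1 * k.2⁻¹ * x.2) * α := by
  rw [ratio_scCol k hμ]
  simp only [scCol, sub_mul, mul_assoc]

lemma qq_scCol (k x y : K × K) {μ α β : K} (hμ : μ ≠ 0) :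
    qq (scCol k μ) (scCol x α) (scCol y β) = α⁻¹ * qq k x y * β := by
  unfold qq
  rw [diff_scCol k x hμ, diff_scCol k y hμ, mul_inv_rev]
  noncomm_ring

/-- Key ring identity behind the invariance of quasi-Plücker coordinates. -/
lemma key (a b c d r v1 v2 : K) (hs : c*r + d ≠ 0) :
    a*v1 + b*v2 - (a*r+b)*(c*r+d)⁻¹*(c*v1+d*v2)
      = (a - (a*r+b)*(c*r+d)⁻¹*c) * (v1 - r*v2) := by
  have hq : (a*r+b)*(c*r+d)⁻¹*(c*r+d) = a*r+b := by
    rw [mul_assoc, inv_mul_cancel₀ hs, mul_one]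
  have h0 : a*v1 + b*v2 - (a*r+b)*(c*r+d)⁻¹*(c*v1+d*v2)
      - ((a - (a*r+b)*(c*r+d)⁻¹*c) * (v1 - r*v2))
      = ((a*r+b) - (a*r+b)*(c*r+d)⁻¹*(c*r+d)) * v2 := by noncomm_ring
  rw [hq, sub_self, zero_mul] at h0
  exact sub_eq_zero.mp h0

lemma qq_mulVec2 (g : Matrix (Fin 2) (Fin 2) K) (k x y : K × K)
    (hk2 : k.2 ≠ 0) (hk2' : (mulVec2 g k).2 ≠ 0)
    (hx' : (mulVec2 g x).1 - (mulVec2 g k).1 * (mulVec2 g k).2⁻¹ * (mulVec2 g x).2 ≠ 0) :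
    qq (mulVec2 g k) (mulVec2 g x) (mulVec2 g y) = qq k x y := by
  set a := g 0 0; set b := g 0 1; set c := g 1 0; set d := g 1 1
  set r := k.1 * k.2⁻¹ with hr
  have hk1 : k.1 = r * k.2 := by rw [hr, mul_assoc, inv_mul_cancel₀ hk2, mul_one]
  have hgk2 : (mulVec2 g k).2 = (c*r + d) * k.2 := by
    simp only [mulVec2]; rw [hk1]; noncomm_ring
  have hs : c*r + d ≠ 0 := by
    intro h; apply hk2'; rw [hgk2, h, zero_mul]
  have hgk1 : (mulVec2 g k).1 = (a*r + b) * k.2 := by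
    simp only [mulVec2]; rw [hk1]; noncomm_ring
  have hratio : (mulVec2 g k).1 * (mulVec2 g k).2⁻¹ = (a*r+b)*(c*r+d)⁻¹ := by
    rw [hgk1, hgk2, mul_inv_rev, mul_assoc, ← mul_assoc k.2, mul_inv_cancel₀ hk2, one_mul]
  set e := a - (a*r+b)*(c*r+d)⁻¹*c with he
  have hdiff : ∀ v : K × K,
      (mulVec2 g v).1 - (mulVec2 g k).1 * (mulVec2 g k).2⁻¹ * (mulVec2 g v).2
        = e * (v.1 - r * v.2) := by
    intro v
    rw [hratio]
    simpa [mulVec2] using key a b c d r v.1 v.2 hs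
  have he0 : e ≠ 0 := by
    intro h; apply hx'; rw [hdiff x, h, zero_mul]
  unfold qq
  rw [hdiff x, hdiff y, mul_inv_rev]
  rw [mul_assoc, ← mul_assoc e⁻¹, inv_mul_cancel₀ he0, one_mul]

end aux

/-- Projective invariance of the noncommutative cross-ratio:
`κ(gxλ₁, gyλ₂, gzλ₃, gtλ₄) = λ₃⁻¹ κ(x,y,z,t) λ₃`. -/
theorem cross_ratio_projective_invariance {K : Type*} [DivisionRing K]
    (g : Matrix (Fin 2) (Fin 2) K) (hg : IsUnit g)
    (lam1 lam2 lam3 lam4 : K)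
    (h1 : lam1 ≠ 0) (h2 : lam2 ≠ 0) (h3 : lam3 ≠ 0) (h4 : lam4 ≠ 0)
    (x y z t : K × K)
    (hx : x.2 ≠ 0) (hy : y.2 ≠ 0)
    (hq1 : z.1 - y.1 * y.2⁻¹ * z.2 ≠ 0)
    (hq2 : t.1 - x.1 * x.2⁻¹ * t.2 ≠ 0)
    (hx' : (scCol (mulVec2 g x) lam1).2 ≠ 0)
    (hy' : (scCol (mulVec2 g y) lam2).2 ≠ 0)
    (hq1' : (scCol (mulVec2 g z) lam3).1 -
        (scCol (mulVec2 g y) lam2).1 * (scCol (mulVec2 g y) lam2).2⁻¹ *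
          (scCol (mulVec2 g z) lam3).2 ≠ 0)
    (hq2' : (scCol (mulVec2 g t) lam4).1 -
        (scCol (mulVec2 g x) lam1).1 * (scCol (mulVec2 g x) lam1).2⁻¹ *
          (scCol (mulVec2 g t) lam4).2 ≠ 0) :
    cr (scCol (mulVec2 g x) lam1) (scCol (mulVec2 g y) lam2)
        (scCol (mulVec2 g z) lam3) (scCol (mulVec2 g t) lam4) =
      lam3⁻¹ * cr x y z t * lam3 := by
  have hgx2 : (mulVec2 g x).2 ≠ 0 := by
    intro h; apply hx'; simp [scCol, h]
  have hgy2 : (mulVec2 g y).2 ≠ 0 := by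
    intro h; apply hy'; simp [scCol, h]
  have hq1g : (mulVec2 g z).1 -
      (mulVec2 g y).1 * (mulVec2 g y).2⁻¹ * (mulVec2 g z).2 ≠ 0 := by
    intro h; apply hq1'
    rw [diff_scCol (mulVec2 g y) (mulVec2 g z) h2, h, zero_mul]
  have hq2g : (mulVec2 g t).1 -
      (mulVec2 g x).1 * (mulVec2 g x).2⁻¹ * (mulVec2 g t).2 ≠ 0 := by
    intro h; apply hq2'
    rw [diff_scCol (mulVec2 g x) (mulVec2 g t) h1, h, zero_mul]
  unfold cr
  rw [qq_scCol (mulVec2 g y) (mulVec2 g z) (mulVec2 g t) h2,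
      qq_scCol (mulVec2 g x) (mulVec2 g t) (mulVec2 g z) h1,
      qq_mulVec2 g y z t hy hgy2 hq1g,
      qq_mulVec2 g x t z hx hgx2 hq2g]
  rw [show (lam3⁻¹ * qq y z t * lam4) * (lam4⁻¹ * qq x t z * lam3)
      = lam3⁻¹ * (qq y z t * (lam4 * lam4⁻¹) * qq x t z) * lam3 from by noncomm_ring,
    mul_inv_cancel₀ h4, mul_one]
end

section
/- Cocycle identity for noncommutative cross-ratios: κ(x,y,z,t) = κ(w,y,z,t) · κ(x,w,z,t), for any five vectors x,y,z,t,w ∈ R² whenever all three cross-ratios exist. -/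
lemma qq_mul_qq_self {K : Type*} [DivisionRing K] (w z t : K × K)
    (h1 : t.1 - w.1 * w.2⁻¹ * t.2 ≠ 0) (h2 : z.1 - w.1 * w.2⁻¹ * z.2 ≠ 0) :
    qq w t z * qq w z t = 1 := by
  unfold qq
  rw [mul_assoc, ← mul_assoc (z.1 - w.1 * w.2⁻¹ * z.2), mul_inv_cancel₀ h2, one_mul,
    inv_mul_cancel₀ h1]

/-- Cocycle identity: `κ(x,y,z,t) = κ(w,y,z,t) · κ(x,w,z,t)`. -/
theorem cross_ratio_cocycle {K : Type*} [DivisionRing K]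
    (x y z t w : K × K)
    (hx : x.2 ≠ 0) (hy : y.2 ≠ 0) (hw : w.2 ≠ 0)
    (hq1 : z.1 - y.1 * y.2⁻¹ * z.2 ≠ 0)
    (hq2 : t.1 - x.1 * x.2⁻¹ * t.2 ≠ 0)
    (hq3 : t.1 - w.1 * w.2⁻¹ * t.2 ≠ 0)
    (hq4 : z.1 - w.1 * w.2⁻¹ * z.2 ≠ 0) :
    cr x y z t = cr w y z t * cr x w z t := by
  unfold cr
  rw [mul_assoc, ← mul_assoc (qq w t z), qq_mul_qq_self w z t hq3 hq4, one_mul]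
end

section
/- For vectors x,y,z,t ∈ R² one has κ(x,y,z,t) = 1 - κ(t,y,z,x), whenever both cross-ratios exist. -/
lemma key_id {K : Type*} [DivisionRing K] (a b c z1 z2 : K) (he : c - b ≠ 0) :
    (c - a) * ((c - b)⁻¹ * (z1 - b * z2)) - (b - a) * ((c - b)⁻¹ * (z1 - c * z2))
      = z1 - a * z2 := by
  have hinv : (c - b) * (c - b)⁻¹ = 1 := mul_inv_cancel₀ he
  have hu2 : (c - b)⁻¹ * ((c - b) * z2) = z2 := by
    rw [← mul_assoc, inv_mul_cancel₀ he, one_mul]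
  calc (c - a) * ((c - b)⁻¹ * (z1 - b * z2)) - (b - a) * ((c - b)⁻¹ * (z1 - c * z2))
      = ((c - b) * (c - b)⁻¹) * (z1 - b * z2)
          + (b - a) * ((c - b)⁻¹ * ((c - b) * z2)) := by noncomm_ring
    _ = (z1 - b * z2) + (b - a) * z2 := by rw [hinv, one_mul, hu2]
    _ = z1 - a * z2 := by noncomm_ring

/-- `κ(x,y,z,t) = 1 - κ(t,y,z,x)`. -/
theorem cross_ratio_one_sub {K : Type*} [DivisionRing K]
    (x y z t : K × K)
    (hx : x.2 ≠ 0) (hy : y.2 ≠ 0) (ht : t.2 ≠ 0)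
    (hq1 : z.1 - y.1 * y.2⁻¹ * z.2 ≠ 0)
    (hq2 : t.1 - x.1 * x.2⁻¹ * t.2 ≠ 0)
    (hq3 : x.1 - t.1 * t.2⁻¹ * x.2 ≠ 0) :
    cr x y z t = 1 - cr t y z x := by
  unfold cr qq
  set a := y.1 * y.2⁻¹ with ha
  set b := x.1 * x.2⁻¹ with hb
  set c := t.1 * t.2⁻¹ with hc
  have hB : t.1 - b * t.2 = (c - b) * t.2 := by
    rw [sub_mul]; congr 1; rw [hc, mul_assoc, inv_mul_cancel₀ ht, mul_one]
  have hC : x.1 - c * x.2 = (b - c) * x.2 := by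
    rw [sub_mul]; congr 1; rw [hb, mul_assoc, inv_mul_cancel₀ hx, mul_one]
  have hT : t.1 - a * t.2 = (c - a) * t.2 := by
    rw [sub_mul]; congr 1; rw [hc, mul_assoc, inv_mul_cancel₀ ht, mul_one]
  have hX : x.1 - a * x.2 = (b - a) * x.2 := by
    rw [sub_mul]; congr 1; rw [hb, mul_assoc, inv_mul_cancel₀ hx, mul_one]
  have he : c - b ≠ 0 := by
    intro h
    exact hq2 (by rw [hB, h, zero_mul])
  have he' : b - c ≠ 0 := by
    intro h
    exact he (by rw [← neg_sub b c, h, neg_zero])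
  refine mul_left_cancel₀ hq1 ?_
  rw [hB, hC, hT, hX, mul_inv_rev, mul_inv_rev, mul_sub (z.1 - a * z.2) 1, mul_one]
  have L : (z.1 - a * z.2) * ((z.1 - a * z.2)⁻¹ * ((c - a) * t.2) *
      (t.2⁻¹ * (c - b)⁻¹ * (z.1 - b * z.2)))
      = (c - a) * ((c - b)⁻¹ * (z.1 - b * z.2)) := by
    calc (z.1 - a * z.2) * ((z.1 - a * z.2)⁻¹ * ((c - a) * t.2) *
        (t.2⁻¹ * (c - b)⁻¹ * (z.1 - b * z.2)))
        = ((z.1 - a * z.2) * (z.1 - a * z.2)⁻¹) *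
            ((c - a) * ((t.2 * t.2⁻¹) * ((c - b)⁻¹ * (z.1 - b * z.2)))) := by noncomm_ring
      _ = (c - a) * ((c - b)⁻¹ * (z.1 - b * z.2)) := by
          rw [mul_inv_cancel₀ hq1, mul_inv_cancel₀ ht, one_mul, one_mul]
  have R : (z.1 - a * z.2) * ((z.1 - a * z.2)⁻¹ * ((b - a) * x.2) *
      (x.2⁻¹ * (b - c)⁻¹ * (z.1 - c * z.2)))
      = (b - a) * ((b - c)⁻¹ * (z.1 - c * z.2)) := by
    calc (z.1 - a * z.2) * ((z.1 - a * z.2)⁻¹ * ((b - a) * x.2) *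
        (x.2⁻¹ * (b - c)⁻¹ * (z.1 - c * z.2)))
        = ((z.1 - a * z.2) * (z.1 - a * z.2)⁻¹) *
            ((b - a) * ((x.2 * x.2⁻¹) * ((b - c)⁻¹ * (z.1 - c * z.2)))) := by noncomm_ring
      _ = (b - a) * ((b - c)⁻¹ * (z.1 - c * z.2)) := by
          rw [mul_inv_cancel₀ hq1, mul_inv_cancel₀ hx, one_mul, one_mul]
  rw [L, R, show (b - c)⁻¹ = -(c - b)⁻¹ by rw [← neg_sub c b, inv_neg],
    ← key_id a b c z.1 z.2 he]
  noncomm_ring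
end

section
/- Conjugation formula under the double transposition (x,y,z,t) → (y,x,t,z): q^x_{tz} κ(x,y,z,t) q^x_{zt} = κ(y,x,t,z), whenever all expressions exist. -/
/-- Conjugation under the double transposition:
`q^x_{tz} κ(x,y,z,t) q^x_{zt} = κ(y,x,t,z)`. -/
theorem cross_ratio_double_transposition {K : Type*} [DivisionRing K]
    (x y z t : K × K)
    (hx : x.2 ≠ 0) (hy : y.2 ≠ 0)
    (hq1 : z.1 - y.1 * y.2⁻¹ * z.2 ≠ 0)
    (hq2 : t.1 - x.1 * x.2⁻¹ * t.2 ≠ 0)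
    (hq3 : z.1 - x.1 * x.2⁻¹ * z.2 ≠ 0) :
    qq x t z * cr x y z t * qq x z t = cr y x t z := by
  have key : qq x t z * qq x z t = 1 := by
    unfold qq
    rw [mul_assoc, ← mul_assoc _ (_)⁻¹, mul_inv_cancel₀ hq3, one_mul,
      inv_mul_cancel₀ hq2]
  unfold cr
  rw [mul_assoc, mul_assoc, key, mul_one]
end

section
/- Collinearity criterion via quasideterminant: three points X=(x₁,x₂), Y=(y₁,y₂), Z=(z₁,z₂) in R² (right R-plane), with X,Y in generic position, lie on a common affine line (i.e. Z = Xλ + Yμ with λ + μ = 1) if and only if the 3×3 quasideterminant with boxed entry at position (3,3) of the matrix ((x₁,y₁,z₁),(x₂,y₂,z₂),(1,1,1)) vanishes; moreover this quasideterminant equals 1 - λ - μ where Xλ + Yμ = Z. -/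
/-- Collinearity criterion via the 3×3 quasideterminant with boxed entry at
position (3,3): given `X`, `Y` in generic position (the 2×2 matrix `M` with
columns `X`, `Y` is invertible with two-sided inverse `N`), the points
`X, Y, Z` lie on a common affine line iff the quasideterminant
`1 - r₃ N c₃` vanishes; moreover the quasideterminant equals `1 - λ - μ`
whenever `Xλ + Yμ = Z`. -/
theorem quasideterminant_collinearity {K : Type*} [DivisionRing K]
    (x1 x2 y1 y2 z1 z2 : K)
    (M N : Matrix (Fin 2) (Fin 2) K)
    (hM : M = !![x1, y1; x2, y2])
    (hN1 : N * M = 1) (hN2 : M * N = 1) :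
    ((1 : K) - (N.mulVec ![z1, z2] 0 + N.mulVec ![z1, z2] 1) = 0 ↔
      ∃ lam mu : K, lam + mu = 1 ∧
        z1 = x1 * lam + y1 * mu ∧ z2 = x2 * lam + y2 * mu) ∧
    ∀ lam mu : K, z1 = x1 * lam + y1 * mu → z2 = x2 * lam + y2 * mu →
      (1 : K) - (N.mulVec ![z1, z2] 0 + N.mulVec ![z1, z2] 1) =
        1 - lam - mu := by
  have hMN : ∀ v : Fin 2 → K, M.mulVec (N.mulVec v) = v := by
    intro v
    rw [Matrix.mulVec_mulVec, hN2, Matrix.one_mulVec]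
  have hNM : ∀ v : Fin 2 → K, N.mulVec (M.mulVec v) = v := by
    intro v
    rw [Matrix.mulVec_mulVec, hN1, Matrix.one_mulVec]
  have key : ∀ lam mu : K, z1 = x1 * lam + y1 * mu → z2 = x2 * lam + y2 * mu →
      N.mulVec ![z1, z2] 0 = lam ∧ N.mulVec ![z1, z2] 1 = mu := by
    intro lam mu h1 h2
    have hz : ![z1, z2] = M.mulVec ![lam, mu] := by
      subst hM
      funext i
      fin_cases i <;>
        simp [Matrix.mulVec, dotProduct, Fin.sum_univ_two, h1, h2]
    rw [hz, hNM]
    simp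
  constructor
  · constructor
    · intro h
      refine ⟨N.mulVec ![z1, z2] 0, N.mulVec ![z1, z2] 1, by rwa [sub_eq_zero, eq_comm] at h, ?_, ?_⟩
      · have := congrFun (hMN ![z1, z2]) 0
        subst hM
        simpa [Matrix.mulVec, dotProduct, Fin.sum_univ_two] using this.symm
      · have := congrFun (hMN ![z1, z2]) 1
        subst hM
        simpa [Matrix.mulVec, dotProduct, Fin.sum_univ_two] using this.symm
    · rintro ⟨lam, mu, hsum, h1, h2⟩
      obtain ⟨e0, e1⟩ := key lam mu h1 h2
      rw [e0, e1, hsum, sub_self]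
  · intro lam mu h1 h2
    obtain ⟨e0, e1⟩ := key lam mu h1 h2
    rw [e0, e1, sub_add_eq_sub_sub]
end

section
/- Noncommutative Konopelchenko relation: let F₁=(x₁,y₁), F₂=(x₂,y₂), F₃=(x₃,y₃) be generic points in R², and for f₁₂, f₂₃, f₃₁ invertible elements of R define F₁₂ = ((x₂-x₁)f₁₂, (y₂-y₁)f₁₂), F₂₃ = ((x₃-x₂)f₂₃, (y₃-y₂)f₂₃), F₃₁ = ((x₁-x₃)f₃₁, (y₁-y₃)f₃₁). Then F₁₂, F₂₃, F₃₁ are collinear if and only if f₁₂^{-1} + f₂₃^{-1} + f₃₁^{-1} = 0. -/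
/-- Noncommutative Konopelchenko relation: for generic points
`F₁=(x₁,y₁)`, `F₂=(x₂,y₂)`, `F₃=(x₃,y₃)` in the right `R`-plane and invertible
`f₁₂, f₂₃, f₃₁`, the points `F₁₂ = ((x₂-x₁)f₁₂,(y₂-y₁)f₁₂)`,
`F₂₃ = ((x₃-x₂)f₂₃,(y₃-y₂)f₂₃)`, `F₃₁ = ((x₁-x₃)f₃₁,(y₁-y₃)f₃₁)` are collinear
iff `f₁₂⁻¹ + f₂₃⁻¹ + f₃₁⁻¹ = 0`. -/
theorem konopelchenko {K : Type*} [DivisionRing K]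
    (x1 x2 x3 y1 y2 y3 f12 f23 f31 : K)
    (hgen : IsUnit (!![x2 - x1, x3 - x2; y2 - y1, y3 - y2] :
      Matrix (Fin 2) (Fin 2) K))
    (h12 : f12 ≠ 0) (h23 : f23 ≠ 0) (h31 : f31 ≠ 0) :
    (∃ lam mu : K, lam + mu = 1 ∧
        (x1 - x3) * f31 = (x2 - x1) * f12 * lam + (x3 - x2) * f23 * mu ∧
        (y1 - y3) * f31 = (y2 - y1) * f12 * lam + (y3 - y2) * f23 * mu) ↔
      f12⁻¹ + f23⁻¹ + f31⁻¹ = 0 := by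
  constructor
  · rintro ⟨lam, mu, hsum, hx, hy⟩
    obtain ⟨u, hu⟩ := hgen
    set M : Matrix (Fin 2) (Fin 2) K := !![x2 - x1, x3 - x2; y2 - y1, y3 - y2] with hM
    set v : Fin 2 → K := ![f12 * lam + f31, f23 * mu + f31] with hv
    have hMv : M.mulVec v = 0 := by
      funext i
      fin_cases i <;>
        simp [hM, hv, Matrix.mulVec, dotProduct, Fin.sum_univ_two]
      · linear_combination (norm := noncomm_ring) -hx
      · linear_combination (norm := noncomm_ring) -hy
    have hvz : v = 0 := by
      have hInv : (Units.val u⁻¹) * M = 1 := by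
        rw [← hu]; exact u.inv_mul
      calc v = (1 : Matrix (Fin 2) (Fin 2) K).mulVec v := (Matrix.one_mulVec v).symm
        _ = ((Units.val u⁻¹) * M).mulVec v := by
              rw [hInv]
        _ = (Units.val u⁻¹).mulVec
              (M.mulVec v) := by rw [Matrix.mulVec_mulVec]
        _ = 0 := by rw [hMv]; exact Matrix.mulVec_zero _
    have h0 : f12 * lam + f31 = 0 := by
      have := congrFun hvz 0; simpa [hv] using this
    have h1 : f23 * mu + f31 = 0 := by
      have := congrFun hvz 1; simpa [hv] using this
    have hlam : f12⁻¹ * f31 = -lam := by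
      have e : f12 * lam = -f31 := by linear_combination (norm := noncomm_ring) h0
      calc f12⁻¹ * f31 = f12⁻¹ * -(f12 * lam) := by rw [e]; noncomm_ring
        _ = -(f12⁻¹ * f12 * lam) := by noncomm_ring
        _ = -lam := by rw [inv_mul_cancel₀ h12, one_mul]
    have hmu : f23⁻¹ * f31 = -mu := by
      have e : f23 * mu = -f31 := by linear_combination (norm := noncomm_ring) h1
      calc f23⁻¹ * f31 = f23⁻¹ * -(f23 * mu) := by rw [e]; noncomm_ring
        _ = -(f23⁻¹ * f23 * mu) := by noncomm_ring
        _ = -mu := by rw [inv_mul_cancel₀ h23, one_mul]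
    have key : (f12⁻¹ + f23⁻¹ + f31⁻¹) * f31 = 0 := by
      calc (f12⁻¹ + f23⁻¹ + f31⁻¹) * f31
          = f12⁻¹ * f31 + f23⁻¹ * f31 + f31⁻¹ * f31 := by noncomm_ring
        _ = -lam + -mu + 1 := by rw [hlam, hmu, inv_mul_cancel₀ h31]
        _ = -(lam + mu) + 1 := by abel
        _ = 0 := by rw [hsum]; abel
    rcases mul_eq_zero.mp key with h | h
    · exact h
    · exact absurd h h31
  · intro h
    have h' : f12⁻¹ + f23⁻¹ = -f31⁻¹ := by linear_combination (norm := noncomm_ring) h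
    refine ⟨-(f12⁻¹ * f31), -(f23⁻¹ * f31), ?_, ?_, ?_⟩
    · calc -(f12⁻¹ * f31) + -(f23⁻¹ * f31) = -((f12⁻¹ + f23⁻¹) * f31) := by noncomm_ring
        _ = f31⁻¹ * f31 := by rw [h']; noncomm_ring
        _ = 1 := inv_mul_cancel₀ h31
    · calc (x1 - x3) * f31
          = -((x2 - x1) * f31) + -((x3 - x2) * f31) := by noncomm_ring
        _ = -((x2 - x1) * (f12 * (f12⁻¹ * f31))) + -((x3 - x2) * (f23 * (f23⁻¹ * f31))) := by
            rw [← mul_assoc f12, mul_inv_cancel₀ h12, one_mul,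
              ← mul_assoc f23, mul_inv_cancel₀ h23, one_mul]
        _ = (x2 - x1) * f12 * -(f12⁻¹ * f31) + (x3 - x2) * f23 * -(f23⁻¹ * f31) := by
            noncomm_ring
    · calc (y1 - y3) * f31
          = -((y2 - y1) * f31) + -((y3 - y2) * f31) := by noncomm_ring
        _ = -((y2 - y1) * (f12 * (f12⁻¹ * f31))) + -((y3 - y2) * (f23 * (f23⁻¹ * f31))) := by
            rw [← mul_assoc f12, mul_inv_cancel₀ h12, one_mul,
              ← mul_assoc f23, mul_inv_cancel₀ h23, one_mul]
        _ = (y2 - y1) * f12 * -(f12⁻¹ * f31) + (y3 - y2) * f23 * -(f23⁻¹ * f31) := by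
            noncomm_ring
end

section
/- Noncommutative Menelaus theorem: let A, B, C be non-collinear points in R², and let P = B(1-t) + Ct, Q = C(1-u) + Au, R = A(1-v) + Bv be points on lines BC, CA, AB respectively. Then P, Q, R are collinear if and only if u(1-u)^{-1} · t(1-t)^{-1} · v(1-v)^{-1} = -1. -/
section aux
variable {K : Type*} [DivisionRing K] {t u v : K}

private lemma key_to_main (ht' : 1 - t ≠ 0) (hv : v ≠ 0) (hv' : 1 - v ≠ 0)
    (hK : u * (1 - u)⁻¹ * t = -((1 - v) * (v⁻¹ * (1 - t)))) :
    u * (1 - u)⁻¹ * (t * (1 - t)⁻¹) * (v * (1 - v)⁻¹) = -1 := by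
  have e : u * (1 - u)⁻¹ * (t * (1 - t)⁻¹) * (v * (1 - v)⁻¹)
      = (u * (1 - u)⁻¹ * t) * ((1 - t)⁻¹ * (v * (1 - v)⁻¹)) := by
    simp [mul_assoc]
  rw [e, hK]
  simp [mul_assoc, inv_mul_cancel_left₀, mul_inv_cancel_left₀, mul_inv_cancel₀,
    ht', hv, hv']

private lemma main_to_key (ht' : 1 - t ≠ 0) (hv : v ≠ 0) (hv' : 1 - v ≠ 0)
    (h : u * (1 - u)⁻¹ * (t * (1 - t)⁻¹) * (v * (1 - v)⁻¹) = -1) :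
    u * (1 - u)⁻¹ * t = -((1 - v) * (v⁻¹ * (1 - t))) := by
  have h2 := congrArg (· * ((1 - v) * (v⁻¹ * (1 - t)))) h
  simp only [mul_assoc, neg_one_mul] at h2
  rw [inv_mul_cancel_left₀ hv', mul_inv_cancel_left₀ hv, inv_mul_cancel₀ ht'] at h2
  simpa [mul_assoc] using h2

private lemma key_to_sum (hu' : 1 - u ≠ 0) (hv : v ≠ 0)
    (hK : u * (1 - u)⁻¹ * t = -((1 - v) * (v⁻¹ * (1 - t)))) :
    (1 - u)⁻¹ * t + v⁻¹ * (1 - t) = 1 := by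
  have e1 : u * (1 - u)⁻¹ = (1 - u)⁻¹ - 1 := by
    have e : u * (1 - u)⁻¹ = (1 - (1 - u)) * (1 - u)⁻¹ := by norm_num
    rw [e, sub_mul, one_mul, mul_inv_cancel₀ hu']
  have e2 : (1 - v) * v⁻¹ = v⁻¹ - 1 := by
    rw [sub_mul, one_mul, mul_inv_cancel₀ hv]
  rw [e1, ← mul_assoc, e2, sub_mul, one_mul, sub_mul, one_mul] at hK
  -- hK : (1-u)⁻¹*t - t = -(v⁻¹*(1-t) - (1-t))
  have h3 := sub_eq_iff_eq_add.mp hK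
  rw [h3]; abel
end aux

/-- Noncommutative Menelaus theorem: let `A, B, C` be affinely independent
points in the right `K`-plane, and `P = B(1-t)+Ct`, `Q = C(1-u)+Au`,
`R = A(1-v)+Bv`. Then `P, Q, R` are collinear (affinely dependent) iff
`u(1-u)⁻¹ · t(1-t)⁻¹ · v(1-v)⁻¹ = -1`. -/
theorem nc_menelaus {K : Type*} [DivisionRing K]
    (a1 a2 b1 b2 c1 c2 t u v : K)
    (ht : t ≠ 0) (hu : u ≠ 0) (hv : v ≠ 0)
    (ht' : 1 - t ≠ 0) (hu' : 1 - u ≠ 0) (hv' : 1 - v ≠ 0)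
    (hindep : ∀ a b c : K,
      a1 * a + b1 * b + c1 * c = 0 → a2 * a + b2 * b + c2 * c = 0 →
      a + b + c = 0 → a = 0 ∧ b = 0 ∧ c = 0) :
    (∃ al be ga : K, ¬(al = 0 ∧ be = 0 ∧ ga = 0) ∧ al + be + ga = 0 ∧
        (b1 * (1 - t) + c1 * t) * al + (c1 * (1 - u) + a1 * u) * be +
          (a1 * (1 - v) + b1 * v) * ga = 0 ∧
        (b2 * (1 - t) + c2 * t) * al + (c2 * (1 - u) + a2 * u) * be +
          (a2 * (1 - v) + b2 * v) * ga = 0) ↔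
      u * (1 - u)⁻¹ * (t * (1 - t)⁻¹) * (v * (1 - v)⁻¹) = -1 := by
  constructor
  · rintro ⟨al, be, ga, hne, hsum, h1, h2⟩
    set a := u * be + (1 - v) * ga with ha_def
    set b := (1 - t) * al + v * ga with hb_def
    set c := t * al + (1 - u) * be with hc_def
    have e1 : a1 * a + b1 * b + c1 * c = 0 := by
      rw [ha_def, hb_def, hc_def, ← h1]; noncomm_ring
    have e2 : a2 * a + b2 * b + c2 * c = 0 := by
      rw [ha_def, hb_def, hc_def, ← h2]; noncomm_ring
    have e3 : a + b + c = 0 := by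
      rw [ha_def, hb_def, hc_def, ← hsum]; noncomm_ring
    obtain ⟨ha, hb, hc⟩ := hindep a b c e1 e2 e3
    rw [ha_def] at ha; rw [hb_def] at hb; rw [hc_def] at hc
    have hal : al ≠ 0 := by
      rintro rfl
      have hbe : be = 0 := by
        have := eq_neg_of_add_eq_zero_right hc
        simpa [hu'] using this
      have hga : ga = 0 := by
        have := eq_neg_of_add_eq_zero_right hb
        simpa [hv] using this
      exact hne ⟨rfl, hbe, hga⟩
    have hbe : be = (1 - u)⁻¹ * -(t * al) := by
      have h' : (1 - u) * be = -(t * al) := eq_neg_of_add_eq_zero_right hc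
      rw [← h', inv_mul_cancel_left₀ hu']
    have hga : ga = v⁻¹ * -((1 - t) * al) := by
      have h' : v * ga = -((1 - t) * al) := eq_neg_of_add_eq_zero_right hb
      rw [← h', inv_mul_cancel_left₀ hv]
    rw [hbe, hga] at ha
    have hfac : (u * (1 - u)⁻¹ * t + (1 - v) * (v⁻¹ * (1 - t))) * al = 0 := by
      rw [← neg_eq_zero, ← ha]; noncomm_ring
    have hz : u * (1 - u)⁻¹ * t + (1 - v) * (v⁻¹ * (1 - t)) = 0 :=
      (mul_eq_zero.mp hfac).resolve_right hal
    exact key_to_main ht' hv hv' (eq_neg_of_add_eq_zero_left hz)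
  · intro h
    have hK := main_to_key ht' hv hv' h
    have hs := key_to_sum hu' hv hK
    refine ⟨1, -((1 - u)⁻¹ * t), -(v⁻¹ * (1 - t)), ?_, ?_, ?_, ?_⟩
    · rintro ⟨h1, -, -⟩; exact one_ne_zero h1
    · calc (1 : K) + -((1 - u)⁻¹ * t) + -(v⁻¹ * (1 - t))
          = 1 - ((1 - u)⁻¹ * t + v⁻¹ * (1 - t)) := by abel
        _ = 0 := by rw [hs, sub_self]
    all_goals {
      have key : ∀ x1 y1 z1 : K,
          (y1 * (1 - t) + z1 * t) * 1 + (z1 * (1 - u) + x1 * u) * -((1 - u)⁻¹ * t) +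
            (x1 * (1 - v) + y1 * v) * -(v⁻¹ * (1 - t))
          = x1 * (u * -((1 - u)⁻¹ * t) + (1 - v) * -(v⁻¹ * (1 - t)))
            + y1 * ((1 - t) + v * -(v⁻¹ * (1 - t)))
            + z1 * (t + (1 - u) * -((1 - u)⁻¹ * t)) := by
        intro x1 y1 z1; noncomm_ring
      rw [key]
      have c1 : t + (1 - u) * -((1 - u)⁻¹ * t) = 0 := by
        rw [mul_neg, mul_inv_cancel_left₀ hu', add_neg_cancel]
      have c2 : (1 - t) + v * -(v⁻¹ * (1 - t)) = 0 := by
        rw [mul_neg, mul_inv_cancel_left₀ hv, add_neg_cancel]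
      have c3 : u * -((1 - u)⁻¹ * t) + (1 - v) * -(v⁻¹ * (1 - t)) = 0 := by
        rw [mul_neg, mul_neg, ← mul_assoc, ← neg_add, hK]
        simp
      rw [c1, c2, c3, mul_zero, mul_zero, mul_zero, add_zero, add_zero]
    }
end

section
/- Equality of the quasideterminant cross-ratio and the operator cross-ratio: for invertible operators (elements of a division ring, or of a suitable matrix algebra) P₁, P₂, Q₁, Q₂ such that P₂ - Q₂, P₁ - Q₁, P₂ - Q₁, P₁ - Q₂ and P₁, P₂ are invertible, the quasideterminant cross-ratio of the columns (1,P₁), (1,P₂), (1,Q₁), (1,Q₂) equals (Q₂ - P₂)^{-1}(P₂ - Q₁)(Q₁ - P₁)^{-1}(P₁ - Q₂). -/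
/-- Equality of the quasideterminant cross-ratio and Zelikin's operator
cross-ratio: `κ(p₁,p₂,q₁,q₂) = (Q₂-P₂)⁻¹(P₂-Q₁)(Q₁-P₁)⁻¹(P₁-Q₂)`. -/
theorem cross_ratio_eq_operator_cross_ratio {K : Type*} [DivisionRing K]
    (P1 P2 Q1 Q2 : K)
    (hP1 : P1 ≠ 0) (hP2 : P2 ≠ 0)
    (h1 : P2 - Q2 ≠ 0) (h2 : P1 - Q1 ≠ 0)
    (h3 : P2 - Q1 ≠ 0) (h4 : P1 - Q2 ≠ 0) :
    (1 - P2⁻¹ * Q2)⁻¹ * (1 - P2⁻¹ * Q1) * (1 - P1⁻¹ * Q1)⁻¹ *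
        (1 - P1⁻¹ * Q2) =
      (Q2 - P2)⁻¹ * (P2 - Q1) * (Q1 - P1)⁻¹ * (P1 - Q2) := by
  have key : ∀ (P Q : K), P ≠ 0 → 1 - P⁻¹ * Q = P⁻¹ * (P - Q) := by
    intro P Q hP
    rw [mul_sub, inv_mul_cancel₀ hP]
  rw [key P2 Q2 hP2, key P2 Q1 hP2, key P1 Q1 hP1, key P1 Q2 hP1,
    mul_inv_rev, mul_inv_rev, inv_inv, inv_inv]
  have e1 : (Q2 - P2)⁻¹ = -(P2 - Q2)⁻¹ := by rw [← neg_sub, inv_neg]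
  have e2 : (Q1 - P1)⁻¹ = -(P1 - Q1)⁻¹ := by rw [← neg_sub, inv_neg]
  rw [e1, e2]
  simp only [neg_mul, mul_neg, neg_neg, mul_assoc,
    mul_inv_cancel_left₀ hP2, mul_inv_cancel_left₀ hP1]
end

section
/- Gauge transformation of the coefficient a: if f₁, f₂ satisfy f_i'' + a f_i' + b f_i = 0 in a division ring R with derivation ', and a = -2f₁'f₁^{-1} - f₁φ''(φ')^{-1}f₁^{-1} where φ = f₁^{-1}f₂, then replacing f_i by hf_i for invertible h transforms a into ã = -2h'h^{-1} + h a h^{-1}. -/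
/-- Gauge transformation of the coefficient `a`: if `f₁, f₂` satisfy
`fᵢ'' + a fᵢ' + b fᵢ = 0` and `a = -2f₁'f₁⁻¹ - f₁φ''(φ')⁻¹f₁⁻¹` with
`φ = f₁⁻¹f₂`, then replacing `fᵢ` by `hfᵢ` transforms `a` into
`ã = -2h'h⁻¹ + h a h⁻¹`. -/
theorem gauge_transformation_a {K : Type*} [DivisionRing K]
    (d : K → K)
    (hadd : ∀ x y : K, d (x + y) = d x + d y)
    (hmul : ∀ x y : K, d (x * y) = d x * y + x * d y)
    (f1 f2 h a b : K)
    (hf1 : f1 ≠ 0) (hf2 : f2 ≠ 0) (hh : h ≠ 0)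
    (hphi' : d (f1⁻¹ * f2) ≠ 0)
    (ode1 : d (d f1) + a * d f1 + b * f1 = 0)
    (ode2 : d (d f2) + a * d f2 + b * f2 = 0)
    (ha : a = -2 * d f1 * f1⁻¹ -
      f1 * d (d (f1⁻¹ * f2)) * (d (f1⁻¹ * f2))⁻¹ * f1⁻¹) :
    -2 * d (h * f1) * (h * f1)⁻¹ -
        (h * f1) * d (d ((h * f1)⁻¹ * (h * f2))) *
          (d ((h * f1)⁻¹ * (h * f2)))⁻¹ * (h * f1)⁻¹ =
      -2 * d h * h⁻¹ + h * a * h⁻¹ := by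
  have key : (h * f1)⁻¹ * (h * f2) = f1⁻¹ * f2 := by
    rw [mul_inv_rev, mul_assoc, ← mul_assoc h⁻¹, inv_mul_cancel₀ hh, one_mul]
  have hinv : (h * f1)⁻¹ = f1⁻¹ * h⁻¹ := mul_inv_rev h f1
  have h1 : h⁻¹ * h = 1 := inv_mul_cancel₀ hh
  have h2 : f1⁻¹ * f1 = 1 := inv_mul_cancel₀ hf1
  rw [key, hmul h f1, ha, hinv]
  set p := d (d (f1⁻¹ * f2)) * (d (f1⁻¹ * f2))⁻¹ with hp
  have : h * f1 * p * (f1⁻¹ * h⁻¹) = h * (f1 * p * f1⁻¹) * h⁻¹ := by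
    noncomm_ring
  rw [mul_assoc (h * f1) (d (d (f1⁻¹ * f2))), ← hp, this]
  have e1 : -2 * (d h * f1 + h * d f1) * (f1⁻¹ * h⁻¹)
      = -2 * d h * h⁻¹ + -2 * (h * (d f1 * f1⁻¹) * h⁻¹) := by
    have : d h * f1 * (f1⁻¹ * h⁻¹) = d h * h⁻¹ := by
      rw [mul_assoc, ← mul_assoc f1, mul_inv_cancel₀ hf1, one_mul]
    calc -2 * (d h * f1 + h * d f1) * (f1⁻¹ * h⁻¹)
        = -2 * (d h * f1 * (f1⁻¹ * h⁻¹)) + -2 * (h * (d f1 * f1⁻¹) * h⁻¹) := by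
          noncomm_ring
      _ = -2 * d h * h⁻¹ + -2 * (h * (d f1 * f1⁻¹) * h⁻¹) := by rw [this]; noncomm_ring
  rw [e1]
  have e2 : h * (-2 * d f1 * f1⁻¹ - f1 * p * f1⁻¹) * h⁻¹
      = -2 * (h * (d f1 * f1⁻¹) * h⁻¹) - h * (f1 * p * f1⁻¹) * h⁻¹ := by noncomm_ring
  rw [mul_assoc f1 (d (d (f1⁻¹ * f2))), ← hp, e2]; noncomm_ring
end

section
/- Noncommutative Schwarzian equation: let R be a division ring with derivation ', and let f, g ∈ R be invertible with g', h' invertible, satisfying f'' = F₁ f and g'' = F₂ g for some F₁, F₂ ∈ R. Set h = f g^{-1} and suppose F₁ h - h F₂ = 0. Then h''' = (3/2) h'' (h')^{-1} h'' - 2 h' F₂. -/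
/-- Noncommutative Schwarzian equation: if `f'' = F₁f`, `g'' = F₂g`,
`h = fg⁻¹` and `F₁h - hF₂ = 0`, then
`h''' = (3/2) h'' (h')⁻¹ h'' - 2 h' F₂`. -/
theorem nc_schwarzian_equation {K : Type*} [DivisionRing K]
    (d : K → K)
    (hadd : ∀ x y : K, d (x + y) = d x + d y)
    (hmul : ∀ x y : K, d (x * y) = d x * y + x * d y)
    (htwo : (2 : K) ≠ 0)
    (f g F1 F2 : K)
    (hf : f ≠ 0) (hg : g ≠ 0)
    (hg' : d g ≠ 0) (hh' : d (f * g⁻¹) ≠ 0)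
    (hF1 : d (d f) = F1 * f) (hF2 : d (d g) = F2 * g)
    (hG : F1 * (f * g⁻¹) - (f * g⁻¹) * F2 = 0) :
    d (d (d (f * g⁻¹))) =
      (3 / 2 : K) * d (d (f * g⁻¹)) * (d (f * g⁻¹))⁻¹ * d (d (f * g⁻¹)) -
        2 * d (f * g⁻¹) * F2 := by
  -- basic facts about the derivation
  have d1 : d 1 = 0 := by
    have h1 : d 1 = d 1 + d 1 := by simpa using hmul 1 1
    have h2 : d 1 + 0 = d 1 + d 1 := by rw [add_zero]; exact h1
    exact (add_left_cancel h2).symm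
  have d2 : d 2 = 0 := by
    have h1 := hadd 1 1
    rw [d1] at h1
    simpa [one_add_one_eq_two] using h1
  have d0 : d 0 = 0 := by
    have h1 : d 0 = d 0 + d 0 := by simpa using hadd 0 0
    have h2 : d 0 + 0 = d 0 + d 0 := by rw [add_zero]; exact h1
    exact (add_left_cancel h2).symm
  have dneg : ∀ x : K, d (-x) = -d x := by
    intro x
    have h1 : d x + d (-x) = 0 := by
      have := hadd x (-x); rw [add_neg_cancel, d0] at this; exact this.symm
    exact eq_neg_of_add_eq_zero_left (by rwa [add_comm] at h1)
  have dsub : ∀ x y : K, d (x - y) = d x - d y := by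
    intro x y
    rw [sub_eq_add_neg, hadd, dneg, sub_eq_add_neg]
  -- derivative of g⁻¹
  have dinv : d g⁻¹ = -(g⁻¹ * (d g * g⁻¹)) := by
    have hgg : g * g⁻¹ = 1 := mul_inv_cancel₀ hg
    have h2 := hmul g g⁻¹
    rw [hgg, d1] at h2
    have h3 : d g * g⁻¹ + g * d g⁻¹ = 0 := h2.symm
    have h4 : g * d g⁻¹ = -(d g * g⁻¹) :=
      eq_neg_of_add_eq_zero_left (by rwa [add_comm] at h3)
    have h5 : d g⁻¹ = g⁻¹ * (g * d g⁻¹) := by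
      rw [inv_mul_cancel_left₀ hg]
    rw [h5, h4, mul_neg]
  -- 2⁻¹ is central
  have c : ∀ x : K, (2 : K)⁻¹ * x = x * 2⁻¹ := by
    intro x
    have h2c : Commute (2 : K) x := by
      unfold Commute SemiconjBy
      rw [two_mul, mul_two]
    exact (h2c.inv_left₀).eq
  have cmid : ∀ x y : K, x * ((2 : K)⁻¹ * y) = 2⁻¹ * (x * y) := by
    intro x y
    rw [← mul_assoc, ← c x, mul_assoc]
  -- first derivative of h
  have hu : d (f * g⁻¹) = d f * g⁻¹ - f * g⁻¹ * (d g * g⁻¹) := by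
    rw [hmul, dinv]
    noncomm_ring
  -- derivative of w = g' g⁻¹
  have hdw : d (d g * g⁻¹) = F2 - d g * g⁻¹ * (d g * g⁻¹) := by
    rw [hmul, dinv, hF2, mul_assoc F2 g g⁻¹, mul_inv_cancel₀ hg, mul_one]
    noncomm_ring
  -- the key identity h'' = -2 h' (g' g⁻¹)
  have hG' : F1 * f * g⁻¹ = f * g⁻¹ * F2 := by
    have h6 := sub_eq_zero.mp hG
    rw [← mul_assoc] at h6
    exact h6
  have key : d (d (f * g⁻¹)) = -(2 * (d (f * g⁻¹) * (d g * g⁻¹))) := by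
    calc d (d (f * g⁻¹)) = d (d f * g⁻¹ - f * g⁻¹ * (d g * g⁻¹)) := by rw [← hu]
      _ = (d (d f) * g⁻¹ + d f * d g⁻¹)
          - (d (f * g⁻¹) * (d g * g⁻¹) + f * g⁻¹ * d (d g * g⁻¹)) := by
            rw [dsub, hmul, hmul]
      _ = (F1 * f * g⁻¹ + d f * -(g⁻¹ * (d g * g⁻¹)))
          - (d (f * g⁻¹) * (d g * g⁻¹)
            + f * g⁻¹ * (F2 - d g * g⁻¹ * (d g * g⁻¹))) := by
            rw [hF1, dinv, hdw]
      _ = -(2 * (d (f * g⁻¹) * (d g * g⁻¹))) := by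
            rw [hG', hu]
            noncomm_ring
  -- express w through h' and h''
  have huw : d (f * g⁻¹) * (d g * g⁻¹) = -((2:K)⁻¹ * d (d (f * g⁻¹))) := by
    rw [key, mul_neg, neg_neg, inv_mul_cancel_left₀ htwo]
  have hw2 : d g * g⁻¹ = (d (f * g⁻¹))⁻¹ * -((2:K)⁻¹ * d (d (f * g⁻¹))) := by
    rw [← huw, ← mul_assoc, inv_mul_cancel₀ hh', one_mul]
  -- third derivative
  have hv : d (d (d (f * g⁻¹))) =
      -(2 * (d (d (f * g⁻¹)) * (d g * g⁻¹)
        + d (f * g⁻¹) * (F2 - d g * g⁻¹ * (d g * g⁻¹)))) := by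
    conv_lhs => rw [key]
    rw [dneg, hmul 2, d2, zero_mul, zero_add, hmul (d (f * g⁻¹)) (d g * g⁻¹), hdw]
  -- abbreviations
  set u := d (f * g⁻¹) with hudef
  set v := d (d (f * g⁻¹)) with hvdef
  have hvw : v * (d g * g⁻¹) = -((2:K)⁻¹ * (v * u⁻¹ * v)) := by
    rw [hw2]
    calc v * (u⁻¹ * -((2:K)⁻¹ * v)) = -(v * (u⁻¹ * ((2:K)⁻¹ * v))) := by
          rw [mul_neg, mul_neg]
      _ = -(v * ((2:K)⁻¹ * (u⁻¹ * v))) := by rw [cmid u⁻¹ v]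
      _ = -((2:K)⁻¹ * (v * (u⁻¹ * v))) := by rw [cmid v]
      _ = -((2:K)⁻¹ * (v * u⁻¹ * v)) := by rw [mul_assoc]
  have huww : u * (d g * g⁻¹ * (d g * g⁻¹)) = (2:K)⁻¹ * ((2:K)⁻¹ * (v * u⁻¹ * v)) := by
    calc u * (d g * g⁻¹ * (d g * g⁻¹)) = u * (d g * g⁻¹) * (d g * g⁻¹) :=
          (mul_assoc u (d g * g⁻¹) (d g * g⁻¹)).symm
      _ = -((2:K)⁻¹ * v) * (d g * g⁻¹) := by rw [huw]
      _ = -((2:K)⁻¹ * (v * (d g * g⁻¹))) := by rw [neg_mul, mul_assoc]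
      _ = -((2:K)⁻¹ * -((2:K)⁻¹ * (v * u⁻¹ * v))) := by rw [hvw]
      _ = (2:K)⁻¹ * ((2:K)⁻¹ * (v * u⁻¹ * v)) := by rw [mul_neg, neg_neg]
  have h32 : (3 / 2 : K) = 2⁻¹ + 1 := by
    have h3 : (3 : K) = 1 + 2 := by norm_num
    rw [div_eq_mul_inv, h3, add_mul, one_mul, mul_inv_cancel₀ htwo]
  have htwoinv : ∀ x : K, (2:K) * ((2:K)⁻¹ * x) = x := by
    intro x
    rw [← mul_assoc, mul_inv_cancel₀ htwo, one_mul]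
  rw [hv, hvw, mul_sub, huww, h32]
  rw [mul_add, mul_sub, mul_neg, htwoinv, htwoinv]
  noncomm_ring
end
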